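/- arXiv:0904.3770 — 8 statements merged into one kernel-verified Lean document; each statement's English description precedes it below -/
import Mathlib

section
/- Let A be an n×n skew-Hermitian complex matrix with zero diagonal blocks and let Λ be a metric datum. Then the real trace tr((Λ∙A)·(A·Y − Y·A)) vanishes for every n×n skew-Hermitian complex matrix Y with zero diagonal blocks if and only if the commutator A·(Λ∙A) − (Λ∙A)·A has all its off-diagonal-block entries equal to zero, i.e. (A·(Λ∙A) − (Λ∙A)·A) p q = 0 for all p, q with π p ≠ π q. -/
/-!
Cyclicity of the trace gives `tr((Λ∙A)·[A,Y]) = -tr([A,Λ∙A]·Y)`, and `C = [A,Λ∙A]` is again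
skew-Hermitian because `Λ` is symmetric. Only the off-diagonal-block part `D` of `C` pairs
with a `Y` vanishing on the diagonal blocks, and `D` is itself an admissible `Y`; testing
against it gives `re tr(C·D) = -tr(Dᴴ·D) = -‖D‖²`, so the pairing vanishes identically iff `D = 0`.
-/

open Matrix BigOperators

/-- The blockwise Hadamard action of a metric datum `Λ` on a matrix `A`:
`(Λ∙A) p q = Λ (π p) (π q) • A p q`. -/
def metricHadamard {n s : ℕ} (π : Fin n → Fin s) (Λ : Fin s → Fin s → ℝ)
    (A : Matrix (Fin n) (Fin n) ℂ) : Matrix (Fin n) (Fin n) ℂ :=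
  Matrix.of fun p q => (Λ (π p) (π q) : ℂ) * A p q

open ComplexOrder

variable {ι κ R : Type*}

theorem trace_mul_commutator_right [Fintype ι] [CommRing R] (A B Y : Matrix ι ι R) :
    trace (B * (A * Y - Y * A)) = -trace ((A * B - B * A) * Y) := by
  rw [mul_sub, sub_mul, trace_sub, trace_sub, ← mul_assoc, ← mul_assoc, trace_mul_cycle B Y A]
  ring

theorem conjTranspose_commutator_of_skew [Fintype ι] [Ring R] [StarRing R] {A B : Matrix ι ι R}
    (hA : Aᴴ = -A) (hB : Bᴴ = -B) : (A * B - B * A)ᴴ = -(A * B - B * A) := by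
  rw [conjTranspose_sub, conjTranspose_mul, conjTranspose_mul, hA, hB, neg_mul_neg, neg_mul_neg,
    neg_sub]

section OffDiagBlocks

variable [DecidableEq κ] (π : ι → κ)

def offDiagBlocks [Zero R] (C : Matrix ι ι R) : Matrix ι ι R :=
  of fun p q => if π p = π q then 0 else C p q

theorem offDiagBlocks_apply_of_eq [Zero R] (C : Matrix ι ι R) {p q : ι} (h : π p = π q) :
    offDiagBlocks π C p q = 0 := if_pos h

theorem offDiagBlocks_eq_zero_iff [Zero R] (C : Matrix ι ι R) :
    offDiagBlocks π C = 0 ↔ ∀ p q, π p ≠ π q → C p q = 0 := by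
  simp only [← Matrix.ext_iff, offDiagBlocks, of_apply, Matrix.zero_apply, ite_eq_left_iff]

theorem offDiagBlocks_neg [NegZeroClass R] (C : Matrix ι ι R) :
    offDiagBlocks π (-C) = -offDiagBlocks π C := by
  ext p q
  simp only [offDiagBlocks, of_apply, Matrix.neg_apply]
  split_ifs <;> simp

theorem conjTranspose_offDiagBlocks [AddMonoid R] [StarAddMonoid R] (C : Matrix ι ι R) :
    (offDiagBlocks π C)ᴴ = offDiagBlocks π Cᴴ := by
  ext p q
  simp only [offDiagBlocks, conjTranspose_apply, of_apply, eq_comm (a := π q)]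
  split_ifs <;> simp

theorem trace_mul_eq_trace_offDiagBlocks_mul [Fintype ι] [NonUnitalNonAssocSemiring R]
    (C : Matrix ι ι R) {Y : Matrix ι ι R} (hY : ∀ p q, π p = π q → Y p q = 0) :
    trace (C * Y) = trace (offDiagBlocks π C * Y) := by
  simp only [trace, diag_apply, mul_apply]
  refine Finset.sum_congr rfl fun p _ => Finset.sum_congr rfl fun q _ => ?_
  by_cases h : π p = π q
  · rw [hY q p h.symm, mul_zero, mul_zero]
  · rw [offDiagBlocks, of_apply, if_neg h]

theorem forall_re_trace_mul_eq_zero_iff [Fintype ι] {C : Matrix ι ι ℂ} (hC : Cᴴ = -C) :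
    (∀ Y : Matrix ι ι ℂ, Yᴴ = -Y → (∀ p q, π p = π q → Y p q = 0) → (trace (C * Y)).re = 0) ↔
      offDiagBlocks π C = 0 := by
  constructor
  · intro h
    let D := offDiagBlocks π C
    have hD : Dᴴ = -D := by rw [conjTranspose_offDiagBlocks, hC, offDiagBlocks_neg]
    have hDblocks : ∀ p q, π p = π q → D p q = 0 := fun p q => offDiagBlocks_apply_of_eq π C
    have hre : (trace (Dᴴ * D)).re = 0 :=
      calc (trace (Dᴴ * D)).re = -(trace (C * D)).re := by
            rw [trace_mul_eq_trace_offDiagBlocks_mul π C hDblocks, hD, neg_mul, trace_neg,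
              Complex.neg_re]
        _ = 0 := by rw [h D hD hDblocks, neg_zero]
    have hnonneg := Complex.nonneg_iff.mp (posSemidef_conjTranspose_mul_self D).trace_nonneg
    exact trace_conjTranspose_mul_self_eq_zero_iff.mp (Complex.ext hre hnonneg.2.symm)
  · rintro h Y - hY
    rw [trace_mul_eq_trace_offDiagBlocks_mul π C hY, h, zero_mul, trace_zero, Complex.zero_re]

end OffDiagBlocks

section MetricHadamard

variable {n s : ℕ} (π : Fin n → Fin s)

theorem metricHadamard_neg (Λ : Fin s → Fin s → ℝ) (A : Matrix (Fin n) (Fin n) ℂ) :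
    metricHadamard π Λ (-A) = -metricHadamard π Λ A := by
  ext p q
  simp only [metricHadamard, of_apply, Matrix.neg_apply, mul_neg]

theorem conjTranspose_metricHadamard {Λ : Fin s → Fin s → ℝ} (hΛ : ∀ i j, Λ i j = Λ j i)
    (A : Matrix (Fin n) (Fin n) ℂ) : (metricHadamard π Λ A)ᴴ = metricHadamard π Λ Aᴴ := by
  ext p q
  simp [metricHadamard, hΛ (π q)]

end MetricHadamard

theorem stmt0_general (n s : ℕ)
    (π : Fin n → Fin s)
    (A : Matrix (Fin n) (Fin n) ℂ) (hA : Aᴴ = -A)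
    (Λ : Fin s → Fin s → ℝ) (hΛsymm : ∀ i j, Λ i j = Λ j i) :
    (∀ Y : Matrix (Fin n) (Fin n) ℂ, Yᴴ = -Y → (∀ p q, π p = π q → Y p q = 0) →
        (Matrix.trace (metricHadamard π Λ A * (A * Y - Y * A))).re = 0) ↔
      (∀ p q, π p ≠ π q →
        (A * metricHadamard π Λ A - metricHadamard π Λ A * A) p q = 0) := by
  have hB : (metricHadamard π Λ A)ᴴ = -metricHadamard π Λ A := by
    rw [conjTranspose_metricHadamard π hΛsymm, hA, metricHadamard_neg]
  simp only [trace_mul_commutator_right, Complex.neg_re, neg_eq_zero]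
  rw [forall_re_trace_mul_eq_zero_iff π (conjTranspose_commutator_of_skew hA hB),
    offDiagBlocks_eq_zero_iff]

/-- A tangent vector `A` is geodesic for the invariant metric determined by `Λ` (i.e. the
trace pairing `tr((Λ∙A)·[A,Y])` vanishes against every tangent direction `Y`) iff the
commutator `[A, Λ∙A]` has vanishing off-diagonal-block part. -/
theorem stmt0 (n s : ℕ) (hs : 1 ≤ s) (hn : 1 ≤ n)
    (π : Fin n → Fin s) (hπ : Function.Surjective π)
    (A : Matrix (Fin n) (Fin n) ℂ) (hA : Aᴴ = -A)
    (hAblocks : ∀ p q, π p = π q → A p q = 0)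
    (Λ : Fin s → Fin s → ℝ) (hΛsymm : ∀ i j, Λ i j = Λ j i)
    (hΛpos : ∀ i j, i ≠ j → 0 < Λ i j) :
    (∀ Y : Matrix (Fin n) (Fin n) ℂ, Yᴴ = -Y → (∀ p q, π p = π q → Y p q = 0) →
        (Matrix.trace (metricHadamard π Λ A * (A * Y - Y * A))).re = 0) ↔
      (∀ p q, π p ≠ π q →
        (A * metricHadamard π Λ A - metricHadamard π Λ A * A) p q = 0) :=
  stmt0_general n s π A hA Λ hΛsymm
end

section
/- Let A be an n×n skew-Hermitian complex matrix with zero diagonal blocks. Then the commutator A·(Λ∙A) − (Λ∙A)·A has all its off-diagonal-block entries equal to zero for EVERY metric datum Λ if and only if A satisfies the equigeodesic condition: a_{ij}·a_{jm} = 0 (matrix product of blocks) for all pairwise distinct block indices i, j, m; explicitly, for all p, q and every block index j with π p, π q, j pairwise distinct, Σ_{r with π r = j} A p r · A r q = 0. -/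
/-! The `(p, q)` entry of `[A, Λ∙A]` is `∑ⱼ (Λ j (π q) - Λ (π p) j) (a_{π p, j} a_{j, π q})_{pq}`,
where the terms `j = π p` and `j = π q` vanish because the diagonal blocks of `A` do. This gives
the reverse direction. Conversely, the metric equal to `2` on the pair `{j, π q}` and `1` elsewhere
kills every coefficient except the one of block `j`, which becomes `1`. -/

open Matrix BigOperators

section Blocks

variable {n s : ℕ} (π : Fin n → Fin s) (A : Matrix (Fin n) (Fin n) ℂ)

/-- The `(p, q)` entry of the block product `a_{π p, j} · a_{j, π q}`. -/
def blockProd (p q : Fin n) (j : Fin s) : ℂ :=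
  ∑ r ∈ Finset.univ.filter (fun r => π r = j), A p r * A r q

lemma commutator_metricHadamard_apply (Λ : Fin s → Fin s → ℝ) (p q : Fin n) :
    (A * metricHadamard π Λ A - metricHadamard π Λ A * A) p q
      = ∑ j, ((Λ j (π q) : ℂ) - Λ (π p) j) * blockProd π A p q j := by
  have entrywise : (A * metricHadamard π Λ A - metricHadamard π Λ A * A) p q
      = ∑ r, ((Λ (π r) (π q) : ℂ) - Λ (π p) (π r)) * (A p r * A r q) := by
    simp only [Matrix.sub_apply, mul_apply, metricHadamard, of_apply, ← Finset.sum_sub_distrib]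
    exact Finset.sum_congr rfl fun r _ => by ring
  rw [entrywise, ← Finset.sum_fiberwise_of_maps_to (g := π) fun r _ => Finset.mem_univ (π r)]
  refine Finset.sum_congr rfl fun j _ => ?_
  rw [blockProd, Finset.mul_sum]
  refine Finset.sum_congr rfl fun r hr => ?_
  rw [(Finset.mem_filter.mp hr).2]

variable {π A}

lemma blockProd_self_left (hA : ∀ p q, π p = π q → A p q = 0) (p q : Fin n) :
    blockProd π A p q (π p) = 0 :=
  Finset.sum_eq_zero fun r hr => by
    rw [hA p r (Finset.mem_filter.mp hr).2.symm, zero_mul]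

lemma blockProd_self_right (hA : ∀ p q, π p = π q → A p q = 0) (p q : Fin n) :
    blockProd π A p q (π q) = 0 :=
  Finset.sum_eq_zero fun r hr => by
    rw [hA r q (Finset.mem_filter.mp hr).2, mul_zero]

end Blocks

section PairBump

variable {α : Type*} [DecidableEq α]

def pairBump (j k : α) (a b : α) : ℝ :=
  if s(a, b) = s(j, k) then 2 else 1

lemma pairBump_symm (j k a b : α) : pairBump j k a b = pairBump j k b a := by
  rw [pairBump, pairBump, Sym2.eq_swap]

lemma pairBump_pos (j k a b : α) : 0 < pairBump j k a b := by
  unfold pairBump; split_ifs <;> norm_num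

lemma pairBump_apply_right {j k : α} (hjk : j ≠ k) (a : α) :
    pairBump j k a k = if a = j then 2 else 1 := by
  simp only [pairBump, Sym2.eq_iff, and_true]
  congr 1
  exact propext ⟨fun h => h.resolve_right fun h' => hjk h'.2.symm, Or.inl⟩

lemma pairBump_of_ne {j k a : α} (hj : a ≠ j) (hk : a ≠ k) (b : α) :
    pairBump j k a b = 1 := by
  simp [pairBump, hj, hk]

end PairBump

theorem stmt3_general (n s : ℕ) (π : Fin n → Fin s)
    (A : Matrix (Fin n) (Fin n) ℂ)
    (hAblocks : ∀ p q, π p = π q → A p q = 0) :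
    (∀ Λ : Fin s → Fin s → ℝ, (∀ i j, Λ i j = Λ j i) → (∀ i j, i ≠ j → 0 < Λ i j) →
        ∀ p q, π p ≠ π q →
          (A * metricHadamard π Λ A - metricHadamard π Λ A * A) p q = 0) ↔
      (∀ (p q : Fin n) (j : Fin s), π p ≠ π q → π p ≠ j → π q ≠ j →
        ∑ r ∈ Finset.univ.filter (fun r => π r = j), A p r * A r q = 0) := by
  constructor
  · intro h p q j hpq hpj hqj
    have hcomm := h (pairBump j (π q)) (pairBump_symm j (π q))
      (fun a b _ => pairBump_pos j (π q) a b) p q hpq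
    rw [commutator_metricHadamard_apply] at hcomm
    simp only [pairBump_apply_right hqj.symm, pairBump_of_ne hpj hpq] at hcomm
    rwa [Finset.sum_eq_single j (fun b _ hb => by simp [hb]) (by simp),
      if_pos rfl, Complex.ofReal_ofNat, Complex.ofReal_one, show (2 : ℂ) - 1 = 1 by norm_num,
      one_mul] at hcomm
  · intro h Λ _ _ p q hpq
    rw [commutator_metricHadamard_apply]
    refine Finset.sum_eq_zero fun j _ => ?_
    rcases eq_or_ne (π p) j with rfl | hpj
    · rw [blockProd_self_left hAblocks, mul_zero]
    rcases eq_or_ne (π q) j with rfl | hqj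
    · rw [blockProd_self_right hAblocks, mul_zero]
    rw [blockProd, h p q j hpq hpj hqj, mul_zero]

/-- `[A, Λ∙A]` has vanishing off-diagonal-block entries for every metric datum `Λ` iff `A`
satisfies the equigeodesic condition: the blockwise products `a_{ij}·a_{jm}` vanish for all
pairwise distinct block indices `i, j, m`. -/
theorem stmt3 (n s : ℕ) (π : Fin n → Fin s) (hπ : Function.Surjective π)
    (A : Matrix (Fin n) (Fin n) ℂ) (hA : Aᴴ = -A)
    (hAblocks : ∀ p q, π p = π q → A p q = 0) :
    (∀ Λ : Fin s → Fin s → ℝ, (∀ i j, Λ i j = Λ j i) → (∀ i j, i ≠ j → 0 < Λ i j) →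
        ∀ p q, π p ≠ π q →
          (A * metricHadamard π Λ A - metricHadamard π Λ A * A) p q = 0) ↔
      (∀ (p q : Fin n) (j : Fin s), π p ≠ π q → π p ≠ j → π q ≠ j →
        ∑ r ∈ Finset.univ.filter (fun r => π r = j), A p r * A r q = 0) :=
  stmt3_general n s π A hAblocks
end

section
/- Let J be an n×n skew-Hermitian complex matrix with zero diagonal entries which is essentially diagonal. Then a complex number λ is an eigenvalue of J if and only if either (λ = i·|J p q| or λ = −i·|J p q|) for some entry J p q ≠ 0, or λ = 0 and J has a zero row. In particular every nonzero eigenvalue of J equals ±i times the absolute value of a nonzero entry of J. -/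
open Matrix BigOperators

/-- A square matrix is essentially diagonal if it has at most one nonzero entry in each
row and in each column. -/
def EssentiallyDiagonal {n : ℕ} (M : Matrix (Fin n) (Fin n) ℂ) : Prop :=
  (∀ p q q', M p q ≠ 0 → M p q' ≠ 0 → q = q') ∧
  (∀ p p' q, M p q ≠ 0 → M p' q ≠ 0 → p = p')

/-!
Up to a permutation of the basis, an essentially diagonal skew-Hermitian matrix with zero
diagonal is a direct sum of zero `1 × 1` blocks and `2 × 2` blocks `!![0, c; -conj c, 0]`
with `c ≠ 0`. Such a block squares to `-‖c‖² • 1`, so its eigenvalues are `±i‖c‖`, with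
eigenvector `(c, λ)`; a zero block contributes the eigenvalue `0`.
-/

theorem Matrix.apply_eq_neg_star_of_conjTranspose_eq_neg {ι α : Type*} [Star α]
    [InvolutiveNeg α] {J : Matrix ι ι α} (hJ : Jᴴ = -J) (p q : ι) :
    J q p = -star (J p q) := by
  rw [← conjTranspose_apply, hJ, neg_apply, neg_neg]

theorem Matrix.apply_ne_zero_of_conjTranspose_eq_neg {ι α : Type*} [AddGroup α]
    [StarAddMonoid α] {J : Matrix ι ι α} (hJ : Jᴴ = -J) {p q : ι} (h : J p q ≠ 0) :
    J q p ≠ 0 := by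
  simpa [apply_eq_neg_star_of_conjTranspose_eq_neg hJ p q] using h

theorem Matrix.mulVec_apply_of_forall_ne_eq_zero {m ι α : Type*} [Fintype ι]
    [NonUnitalNonAssocSemiring α] (M : Matrix m ι α) (v : ι → α) {r : m} {s : ι}
    (h : ∀ t ≠ s, M r t = 0) : (M *ᵥ v) r = M r s * v s :=
  Fintype.sum_eq_single s fun t ht => by simp only [h t ht, zero_mul]

theorem sq_eq_neg_sq_iff_eq_I_mul {z : ℂ} {x : ℝ} :
    z ^ 2 = -(x : ℂ) ^ 2 ↔ z = Complex.I * x ∨ z = -(Complex.I * x) := by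
  rw [show -(x : ℂ) ^ 2 = (Complex.I * x) ^ 2 by rw [mul_pow, Complex.I_sq]; ring]
  exact sq_eq_sq_iff_eq_or_eq_neg

namespace EssentiallyDiagonal

variable {n : ℕ} {J : Matrix (Fin n) (Fin n) ℂ}

theorem mulVec_apply (hED : EssentiallyDiagonal J) (v : Fin n → ℂ) {r s : Fin n}
    (hrs : J r s ≠ 0) : (J *ᵥ v) r = J r s * v s :=
  J.mulVec_apply_of_forall_ne_eq_zero v fun t hts =>
    not_ne_iff.mp fun hrt => hts (hED.1 r t s hrt hrs)

theorem exists_row_eq_zero_of_mulVec_eq_zero (hED : EssentiallyDiagonal J) (hJ : Jᴴ = -J)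
    {v : Fin n → ℂ} (hv : v ≠ 0) (hJv : J *ᵥ v = 0) : ∃ p, ∀ q, J p q = 0 := by
  by_contra! hrows
  refine hv (funext fun s => ?_)
  obtain ⟨q, hsq⟩ := hrows s
  have hqs := apply_ne_zero_of_conjTranspose_eq_neg hJ hsq
  have h := congrFun hJv q
  rw [hED.mulVec_apply v hqs] at h
  exact (mul_eq_zero.mp h).resolve_left hqs

theorem sq_mul_apply_of_mulVec_eq_smul (hED : EssentiallyDiagonal J) (hJ : Jᴴ = -J)
    {v : Fin n → ℂ} {lam : ℂ} (hJv : J *ᵥ v = lam • v) {r s : Fin n} (hrs : J r s ≠ 0) :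
    lam ^ 2 * v r = -(‖J r s‖ : ℂ) ^ 2 * v r := by
  have hnorm : star (J r s) * J r s = (‖J r s‖ : ℂ) ^ 2 := Complex.conj_mul' _
  have hsr := apply_ne_zero_of_conjTranspose_eq_neg hJ hrs
  have e₁ : J r s * v s = lam * v r := by rw [← hED.mulVec_apply v hrs, hJv]; rfl
  have e₂ : J s r * v r = lam * v s := by rw [← hED.mulVec_apply v hsr, hJv]; rfl
  rw [apply_eq_neg_star_of_conjTranspose_eq_neg hJ r s] at e₂
  linear_combination -lam * e₁ - J r s * e₂ - v r * hnorm

theorem mulVec_pair_eq_smul (hED : EssentiallyDiagonal J) (hJ : Jᴴ = -J)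
    (hJdiag : ∀ p, J p p = 0) {p q : Fin n} (hpq : J p q ≠ 0) {lam : ℂ}
    (hlam : lam ^ 2 = -(‖J p q‖ : ℂ) ^ 2) :
    J *ᵥ (Pi.single p (J p q) + Pi.single q lam) =
      lam • (Pi.single p (J p q) + Pi.single q lam) := by
  have hqp := apply_ne_zero_of_conjTranspose_eq_neg hJ hpq
  have hp_ne_q : p ≠ q := fun h => hpq (h ▸ hJdiag p)
  funext r
  simp only [mulVec_add, mulVec_single, Pi.add_apply, Pi.smul_apply, Pi.single_apply,
    smul_eq_mul, op_smul_eq_mul, col_apply]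
  by_cases hrp : r = p
  · subst hrp
    simp [hp_ne_q, hJdiag, mul_comm]
  by_cases hrq : r = q
  · subst hrq
    rw [if_neg (Ne.symm hp_ne_q), if_pos rfl, hJdiag,
      apply_eq_neg_star_of_conjTranspose_eq_neg hJ]
    have hnorm : star (J p r) * J p r = (‖J p r‖ : ℂ) ^ 2 := Complex.conj_mul' _
    linear_combination -hnorm - hlam
  have hrp' : J r p = 0 := not_ne_iff.mp fun h => hrq (hED.2 r q p h hqp)
  have hrq' : J r q = 0 := not_ne_iff.mp fun h => hrp (hED.2 r p q h hpq)
  simp [hrp, hrq, hrp', hrq']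

end EssentiallyDiagonal

/-- The eigenvalues of an essentially diagonal skew-Hermitian matrix `J` with zero
diagonal: `λ` is an eigenvalue iff `λ = ± i·|J p q|` for some nonzero entry `J p q`, or
`λ = 0` and `J` has a zero row. In particular every nonzero eigenvalue is `±i` times the
absolute value of a nonzero entry. -/
theorem stmt7 (n : ℕ) (J : Matrix (Fin n) (Fin n) ℂ) (hJ : Jᴴ = -J)
    (hJdiag : ∀ p, J p p = 0) (hED : EssentiallyDiagonal J) (lam : ℂ) :
    (∃ v : Fin n → ℂ, v ≠ 0 ∧ J.mulVec v = lam • v) ↔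
      ((∃ p q, J p q ≠ 0 ∧
          (lam = Complex.I * (‖J p q‖ : ℂ) ∨
            lam = -(Complex.I * (‖J p q‖ : ℂ)))) ∨
        (lam = 0 ∧ ∃ p, ∀ q, J p q = 0)) := by
  constructor
  · rintro ⟨v, hv, hJv⟩
    by_cases hlam : lam = 0
    · subst hlam
      exact Or.inr ⟨rfl, hED.exists_row_eq_zero_of_mulVec_eq_zero hJ hv (by simpa using hJv)⟩
    obtain ⟨r, hr⟩ := Function.ne_iff.mp hv
    obtain ⟨s, hrs⟩ : ∃ s, J r s ≠ 0 := by
      by_contra! hrow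
      have h := congrFun hJv r
      simp [mulVec, dotProduct, hrow, hlam] at h
      exact hr h
    exact Or.inl ⟨r, s, hrs, sq_eq_neg_sq_iff_eq_I_mul.mp
      (mul_right_cancel₀ hr (hED.sq_mul_apply_of_mulVec_eq_smul hJ hJv hrs))⟩
  · rintro (⟨p, q, hpq, hlam⟩ | ⟨rfl, p, hp⟩)
    · have hp_ne_q : p ≠ q := fun h => hpq (h ▸ hJdiag p)
      refine ⟨Pi.single p (J p q) + Pi.single q lam, fun h => hpq ?_,
        hED.mulVec_pair_eq_smul hJ hJdiag hpq (sq_eq_neg_sq_iff_eq_I_mul.mpr hlam)⟩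
      simpa [hp_ne_q] using congrFun h p
    · refine ⟨Pi.single p 1, by simp, funext fun r => ?_⟩
      simp [apply_eq_neg_star_of_conjTranspose_eq_neg hJ p r, hp r]
end

section
/- Let A be an n×n skew-Hermitian complex matrix with zero diagonal entries. Then A satisfies A p q · A q r = 0 for all pairwise distinct indices p, q, r if and only if A is essentially diagonal, i.e. A has at most one nonzero entry in each row and in each column. -/
open Matrix BigOperators

namespace Matrix

variable {m α : Type*}

theorem apply_eq_zero_comm_of_conjTranspose_eq_neg [AddGroup α] [StarAddMonoid α]
    {A : Matrix m m α} (hA : Aᴴ = -A) (i j : m) : A i j = 0 ↔ A j i = 0 := by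
  have hij : star (A i j) = -A j i := congrFun₂ hA j i
  rw [← star_eq_zero, hij, neg_eq_zero]

/-- A nonzero `A p q * A q r` is the same as two nonzero entries `A q p`, `A q r` in row `q`. -/
theorem forall_path_mul_eq_zero_iff [MulZeroClass α] [NoZeroDivisors α] {A : Matrix m m α}
    (hA : ∀ i j, A i j = 0 ↔ A j i = 0) (hdiag : ∀ p, A p p = 0) :
    (∀ p q r, p ≠ q → q ≠ r → p ≠ r → A p q * A q r = 0) ↔
      ∀ p q q', A p q ≠ 0 → A p q' ≠ 0 → q = q' := by
  constructor
  · intro h p q q' hpq hpq'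
    by_contra hqq'
    have hp_ne_q : p ≠ q := by rintro rfl; exact hpq (hdiag p)
    have hp_ne_q' : p ≠ q' := by rintro rfl; exact hpq' (hdiag p)
    have hqp : A q p ≠ 0 := (hA p q).not.mp hpq
    exact mul_ne_zero hqp hpq' (h q p q' hp_ne_q.symm hp_ne_q' hqq')
  · intro hrow p q r hpq hqr hpr
    by_contra hprod
    obtain ⟨hpq0, hqr0⟩ := mul_ne_zero_iff.mp hprod
    exact hpr (hrow q p r ((hA p q).not.mp hpq0) hqr0)

end Matrix

theorem essentiallyDiagonal_iff_of_apply_eq_zero_comm {n : ℕ} {A : Matrix (Fin n) (Fin n) ℂ}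
    (hA : ∀ i j, A i j = 0 ↔ A j i = 0) :
    EssentiallyDiagonal A ↔ ∀ p q q', A p q ≠ 0 → A p q' ≠ 0 → q = q' := by
  refine ⟨And.left, fun hrow => ⟨hrow, fun p p' q hpq hp'q => ?_⟩⟩
  exact hrow q p p' ((hA p q).not.mp hpq) ((hA p' q).not.mp hp'q)

/-- A skew-Hermitian matrix with zero diagonal satisfies the (full flag) equigeodesic
condition `A p q · A q r = 0` for pairwise distinct `p, q, r` iff it is essentially
diagonal. -/
theorem stmt8 (n : ℕ) (A : Matrix (Fin n) (Fin n) ℂ) (hA : Aᴴ = -A)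
    (hAdiag : ∀ p, A p p = 0) :
    (∀ p q r : Fin n, p ≠ q → q ≠ r → p ≠ r → A p q * A q r = 0) ↔
      EssentiallyDiagonal A := by
  have hsupp := apply_eq_zero_comm_of_conjTranspose_eq_neg hA
  rw [forall_path_mul_eq_zero_iff hsupp hAdiag,
    essentiallyDiagonal_iff_of_apply_eq_zero_comm hsupp]
end

section
/- Let A be an n×n skew-Hermitian complex matrix with zero diagonal entries which is essentially diagonal, and suppose the absolute values of its entries are commensurate: there exists c ∈ ℝ such that for all p, q there is an integer m with |A p q| = m·c. Then there exists T > 0 with exp(T·A) = 1; in particular the homogeneous geodesic t ↦ exp(tA)·o on the full flag manifold F(n) determined by A is closed. -/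
/-!
Since `Aᴴ = -A`, the matrix `A` is normal and `A² = -AᴴA`. Because `A` has at most one
nonzero entry per row, `AᴴA` is diagonal, and because it has at most one per column, each
diagonal entry is `‖A i j‖²` for a single entry. Hence every eigenvalue `z` of `A` satisfies
`z² = -(m c)²` with `m ∈ ℤ`, i.e. `z ∈ i c ℤ`. By the continuous functional calculus for the
normal matrix `A`, `exp (T • A) = 1` as soon as `exp (T z) = 1` on the spectrum of `A`, which
holds for `T = 2π / c`.
-/

open Matrix NormedSpace

theorem Fintype.exists_sum_eq_apply_of_support_subsingleton {ι M : Type*} [Fintype ι]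
    [Nonempty ι] [AddCommMonoid M] {f : ι → M} (hf : (Function.support f).Subsingleton) :
    ∃ i, ∑ j, f j = f i := by
  obtain hf0 | ⟨i, hi⟩ := hf.eq_empty_or_singleton
  · obtain ⟨i⟩ := ‹Nonempty ι›
    simp_all [Function.support_eq_empty_iff]
  · refine ⟨i, Fintype.sum_eq_single i fun j hj => ?_⟩
    by_contra hfj
    exact hj (by simpa [hi] using (Function.mem_support.mpr hfj : j ∈ Function.support f))

theorem exists_pos_forall_eq_int_mul_of_nonneg {ι : Type*} {x : ι → ℝ}
    (hx : ∀ i, 0 ≤ x i) {c : ℝ} (h : ∀ i, ∃ m : ℤ, x i = m * c) :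
    ∃ c > 0, ∀ i, ∃ m : ℤ, x i = m * c := by
  rcases eq_or_ne c 0 with rfl | hc
  · exact ⟨1, one_pos, fun i => ⟨0, by simpa using h i⟩⟩
  refine ⟨|c|, abs_pos.mpr hc, fun i => ?_⟩
  obtain ⟨m, hm⟩ := h i
  refine ⟨|m|, ?_⟩
  rw [← abs_of_nonneg (hx i), hm, abs_mul, Int.cast_abs]

theorem Complex.exp_eq_one_of_sq_eq {w : ℂ} {m : ℤ}
    (h : w ^ 2 = (m * (2 * Real.pi * I)) ^ 2) : exp w = 1 := by
  rcases sq_eq_sq_iff_eq_or_eq_neg.mp h with rfl | rfl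
  · exact exp_int_mul_two_pi_mul_I m
  · simpa using exp_int_mul_two_pi_mul_I (-m)

theorem NormedSpace.exp_smul_eq_one_of_spectrum {A : Type*} [CStarAlgebra A] {a : A}
    [IsStarNormal a] (t : ℂ) (h : ∀ z ∈ spectrum ℂ a, Complex.exp (t * z) = 1) :
    exp (t • a) = 1 := by
  rw [← CFC.complex_exp_eq_normedSpace_exp, ← cfc_comp_const_mul t Complex.exp a, cfc_congr h,
    cfc_const_one ℂ a]

namespace Matrix

variable {ι : Type*} [Fintype ι] [DecidableEq ι]

theorem exists_sq_eq_of_mem_spectrum_of_sq_eq_diagonal {𝕜 : Type*} [Field 𝕜]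
    {M : Matrix ι ι 𝕜} {d : ι → 𝕜} (hM : M ^ 2 = diagonal d) {z : 𝕜}
    (hz : z ∈ spectrum 𝕜 M) : ∃ i, z ^ 2 = d i := by
  simpa [hM, eq_comm] using spectrum.pow_mem_pow M 2 hz

theorem conjTranspose_mul_self_eq_diagonal {𝕜 : Type*} [RCLike 𝕜] {A : Matrix ι ι 𝕜}
    (hA : ∀ i j j', A i j ≠ 0 → A i j' ≠ 0 → j = j') :
    Aᴴ * A = diagonal fun j => ∑ i, (‖A i j‖ ^ 2 : 𝕜) := by
  ext j j'
  rcases eq_or_ne j j' with rfl | hj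
  · simp [mul_apply, RCLike.conj_mul]
  · refine (Finset.sum_eq_zero fun i _ => ?_).trans (diagonal_apply_ne _ hj).symm
    by_contra h
    obtain ⟨h1, h2⟩ := mul_ne_zero_iff.mp h
    exact hj (hA i j j' (by simpa using h1) h2)

end Matrix

theorem EssentiallyDiagonal.exists_sq_eq_neg_norm_sq_of_mem_spectrum {n : ℕ}
    {A : Matrix (Fin n) (Fin n) ℂ} (hA : Aᴴ = -A) (hED : EssentiallyDiagonal A) {z : ℂ}
    (hz : z ∈ spectrum ℂ A) : ∃ i j, z ^ 2 = -‖A i j‖ ^ 2 := by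
  have hsq : A ^ 2 = diagonal fun j => -∑ i, (‖A i j‖ ^ 2 : ℂ) :=
    calc A ^ 2 = -(Aᴴ * A) := by rw [hA, sq, neg_mul, neg_neg]
      _ = _ := by rw [conjTranspose_mul_self_eq_diagonal hED.1, diagonal_neg]; rfl
  obtain ⟨j, hj⟩ := exists_sq_eq_of_mem_spectrum_of_sq_eq_diagonal hsq hz
  have : Nonempty (Fin n) := ⟨j⟩
  obtain ⟨i, hi⟩ := Fintype.exists_sum_eq_apply_of_support_subsingleton
    (f := fun i => (‖A i j‖ ^ 2 : ℂ))
    fun i hi i' hi' => hED.2 i i' j (by simpa using hi) (by simpa using hi')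
  exact ⟨i, j, by rw [hj, hi]⟩

theorem stmt10_general (n : ℕ) (A : Matrix (Fin n) (Fin n) ℂ) (hA : Aᴴ = -A)
    (hED : EssentiallyDiagonal A)
    (hcomm : ∃ c : ℝ, ∀ p q : Fin n, ∃ m : ℤ, (‖A p q‖ : ℝ) = (m : ℝ) * c) :
    ∃ T : ℝ, 0 < T ∧ exp (T • A) = 1 := by
  obtain ⟨c₀, hc₀⟩ := hcomm
  obtain ⟨c, hc, hcomm⟩ := exists_pos_forall_eq_int_mul_of_nonneg
    (x := fun ij : Fin n × Fin n => ‖A ij.1 ij.2‖) (fun _ => norm_nonneg _)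
    fun ij => hc₀ ij.1 ij.2
  refine ⟨2 * Real.pi / c, by positivity, ?_⟩
  have : IsStarNormal A := skewAdjoint.isStarNormal_of_mem (skewAdjoint.mem_iff.mpr hA)
  rw [← Complex.coe_smul]
  -- The L2 operator norm makes matrices a C⋆-algebra without changing their topology, hence `exp`.
  open scoped Matrix.Norms.L2Operator in
  refine exp_smul_eq_one_of_spectrum _ fun z hz => ?_
  obtain ⟨i, j, hz⟩ := hED.exists_sq_eq_neg_norm_sq_of_mem_spectrum hA hz
  obtain ⟨m, hm⟩ := hcomm (i, j)
  refine Complex.exp_eq_one_of_sq_eq (m := m) ?_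
  have hc' : (c : ℂ) ≠ 0 := by exact_mod_cast hc.ne'
  rw [mul_pow, hz, show ‖A i j‖ = (m * c : ℝ) from hm]
  push_cast
  field_simp
  ring_nf
  simp [Complex.I_sq]

/-- If `A` is skew-Hermitian with zero diagonal, essentially diagonal, and the absolute
values of its entries are commensurate, then the one-parameter group `t ↦ exp(tA)` is
periodic: there is `T > 0` with `exp(T·A) = 1`; hence the corresponding homogeneous
geodesic on the full flag manifold is closed. -/
theorem stmt10 (n : ℕ) (A : Matrix (Fin n) (Fin n) ℂ) (hA : Aᴴ = -A)
    (hAdiag : ∀ p, A p p = 0) (hED : EssentiallyDiagonal A)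
    (hcomm : ∃ c : ℝ, ∀ p q : Fin n, ∃ m : ℤ, (‖A p q‖ : ℝ) = (m : ℝ) * c) :
    ∃ T : ℝ, 0 < T ∧ exp (T • A) = 1 :=
  stmt10_general n A hA hED hcomm
end

section
/- Fix n ≥ 2, distinct indices p ≠ q in Fin n, and a nonzero complex number z. Let X = z·E_pq − conj(z)·E_qp (an n×n skew-Hermitian matrix). Then exp((2π/|z|)·X) = 1, the identity matrix; hence the curve t ↦ exp(tX) is periodic and the corresponding homogeneous geodesic on the full flag manifold F(n) is closed. -/
open Matrix NormedSpace

/-!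
`X = z E_pq - conj z E_qp` satisfies `X³ = -|z|² X`, so `Y = -(i/|z|) X` is a tripotent:
`Y³ = Y`. Then `P± = (Y² ± Y)/2` are orthogonal idempotents with `Y = P₊ - P₋`, and summing the
exponential series termwise gives
`exp (2πi Y) = 1 + (e^{2πi} - 1) P₊ + (e^{-2πi} - 1) P₋ = 1`.
-/

theorem pow_succ_smul_add_smul_of_orthogonal {R 𝔸 : Type*} [CommSemiring R] [Semiring 𝔸]
    [Algebra R 𝔸] {P Q : 𝔸} (hP : IsIdempotentElem P)
    (hQ : IsIdempotentElem Q) (hPQ : P * Q = 0) (hQP : Q * P = 0) (a b : R) (n : ℕ) :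
    (a • P + b • Q) ^ (n + 1) = a ^ (n + 1) • P + b ^ (n + 1) • Q := by
  induction n with
  | zero => simp
  | succ n ih =>
    rw [pow_succ, ih]
    simp only [add_mul, mul_add, smul_mul_smul, hP.eq, hQ.eq, hPQ, hQP, smul_zero, add_zero,
      zero_add, pow_succ]

section TopologicalAlgebra

variable {𝔸 : Type*} [Ring 𝔸] [Algebra ℂ 𝔸] [TopologicalSpace 𝔸] [IsTopologicalRing 𝔸]
  [ContinuousSMul ℂ 𝔸] [T2Space 𝔸]

theorem exp_smul_add_smul_of_orthogonal {P Q : 𝔸} (hP : IsIdempotentElem P)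
    (hQ : IsIdempotentElem Q) (hPQ : P * Q = 0) (hQP : Q * P = 0) (a b : ℂ) :
    exp (a • P + b • Q) = 1 + (Complex.exp a - 1) • P + (Complex.exp b - 1) • Q := by
  have hexp (c : ℂ) (R : 𝔸) :
      HasSum (fun n : ℕ => (c ^ n / n.factorial) • R) (Complex.exp c • R) := by
    rw [Complex.exp_eq_exp_ℂ]
    exact (expSeries_div_hasSum_exp c).smul_const R
  have hsum := ((hexp a P).add (hexp b Q)).add (hasSum_ite_eq 0 (1 - P - Q))
  rw [exp_eq_tsum ℂ]
  dsimp only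
  convert hsum.tsum_eq using 1
  · congr 1
    funext n
    rcases n with _ | n
    · simp
    · rw [pow_succ_smul_add_smul_of_orthogonal hP hQ hPQ hQP, if_neg n.succ_ne_zero, add_zero,
        smul_add, smul_smul, smul_smul, div_eq_inv_mul, div_eq_inv_mul]
  · simp only [sub_smul, one_smul]; abel

theorem exp_two_pi_I_smul_of_pow_three_eq_self {Y : 𝔸} (hY : Y ^ 3 = Y) :
    exp ((2 * Real.pi * Complex.I) • Y) = 1 := by
  have hsq : Y * Y = Y ^ 2 := (sq Y).symm
  have hcube : Y * Y ^ 2 = Y := by rw [← pow_succ', hY]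
  have hcube' : Y ^ 2 * Y = Y := by rw [← pow_succ, hY]
  have hquart : Y ^ 2 * Y ^ 2 = Y ^ 2 := by rw [← pow_add, pow_succ, hY, sq]
  set P := (2⁻¹ : ℂ) • (Y ^ 2 + Y)
  set Q := (2⁻¹ : ℂ) • (Y ^ 2 - Y)
  have hP : IsIdempotentElem P := by
    simp only [P, IsIdempotentElem, smul_mul_smul, add_mul, mul_add, hsq, hcube, hcube', hquart]
    module
  have hQ : IsIdempotentElem Q := by
    simp only [Q, IsIdempotentElem, smul_mul_smul, sub_mul, mul_sub, hsq, hcube, hcube', hquart]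
    module
  have hPQ : P * Q = 0 := by
    simp only [P, Q, smul_mul_smul, add_mul, mul_sub, hsq, hcube, hcube', hquart]
    module
  have hQP : Q * P = 0 := by
    simp only [P, Q, smul_mul_smul, sub_mul, mul_add, hsq, hcube, hcube', hquart]
    module
  have hY : (2 * Real.pi * Complex.I) • Y =
      (2 * Real.pi * Complex.I) • P + (-(2 * Real.pi * Complex.I)) • Q := by
    simp only [P, Q]; module
  rw [hY, exp_smul_add_smul_of_orthogonal hP hQ hPQ hQP, Complex.exp_neg,
    Complex.exp_two_pi_mul_I]
  simp

theorem exp_smul_eq_one_of_pow_three_eq_neg_sq_smul {X : 𝔸} {r : ℂ} (hr : r ≠ 0)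
    (hX : X ^ 3 = -(r ^ 2) • X) : exp ((2 * Real.pi / r) • X) = 1 := by
  have hY : ((-Complex.I / r) • X) ^ 3 = (-Complex.I / r) • X := by
    rw [smul_pow, hX, smul_smul]
    congr 1
    field_simp
    exact Complex.I_sq
  rw [← exp_two_pi_I_smul_of_pow_three_eq_self hY, smul_smul]
  congr 2
  field_simp
  linear_combination Complex.I_sq

end TopologicalAlgebra

theorem single_add_single_pow_three {m R : Type*} [Fintype m] [DecidableEq m] [CommSemiring R]
    {p q : m} (hpq : p ≠ q) (a b : R) :
    (single p q a + single q p b) ^ 3 = (a * b) • (single p q a + single q p b) := by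
  simp only [pow_three, mul_add, add_mul, ne_eq, hpq, hpq.symm, not_false_eq_true,
    single_mul_single_of_ne, single_mul_single_same, zero_add, add_zero, smul_add, smul_single,
    smul_eq_mul]
  congr 2 <;> ring

theorem stmt13_general (n : ℕ) (p q : Fin n) (hpq : p ≠ q) (z : ℂ) (hz : z ≠ 0) :
    exp (((2 * Real.pi / ‖z‖ : ℝ)) •
        (z • Matrix.single p q (1 : ℂ)
          - (starRingEnd ℂ z) • Matrix.single q p (1 : ℂ))) = 1 := by
  have hX : z • single p q (1 : ℂ) - (starRingEnd ℂ z) • single q p 1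
      = single p q z + single q p (-(starRingEnd ℂ z)) := by
    simp only [smul_single, smul_eq_mul, mul_one, single_neg, sub_eq_add_neg]
  have hcube := single_add_single_pow_three hpq z (-(starRingEnd ℂ z))
  rw [mul_neg, Complex.mul_conj'] at hcube
  rw [hX, ← Complex.coe_smul]
  push_cast
  exact exp_smul_eq_one_of_pow_three_eq_neg_sq_smul (by simpa using hz) hcube

/-- For `X = z·E_pq − conj(z)·E_qp` with `z ≠ 0` and `p ≠ q`, one has
`exp((2π/|z|)·X) = 1`; hence `t ↦ exp(tX)` is periodic and the corresponding homogeneous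
geodesic on the full flag manifold `F(n)` is closed. -/
theorem stmt13 (n : ℕ) (hn : 2 ≤ n) (p q : Fin n) (hpq : p ≠ q) (z : ℂ) (hz : z ≠ 0) :
    exp (((2 * Real.pi / ‖z‖ : ℝ)) •
        (z • Matrix.single p q (1 : ℂ)
          - (starRingEnd ℂ z) • Matrix.single q p (1 : ℂ))) = 1 :=
  stmt13_general n p q hpq z hz
end

section
/- Fix n ≥ 3 and the block structure on Fin n with three blocks of sizes n−2, 1, 1 (indices 1,…,n−2 in block 1, index n−1 in block 2, index n in block 3). Let A be an n×n skew-Hermitian complex matrix with zero diagonal blocks satisfying the equigeodesic condition (a_{ij}·a_{jm} = 0 for pairwise distinct block indices i, j, m), and suppose A is not essentially block-diagonal, so that the column vectors a_{12}, a_{13} ∈ ℂ^{n−2} are both nonzero. Then the scalar block a_{23} is zero and a_{12} and a_{13} are orthogonal: a_{12}ᴴ·a_{13} = 0. -/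
/-!
Since `A` is skew-Hermitian, the block `a_{ij}` vanishes iff `a_{ji}` does, so with three
blocks `A` is essentially block-diagonal as soon as two of `a_{12}, a_{13}, a_{23}` vanish.
The blocks 2 and 3 are single indices, so the equigeodesic condition for the triples
`(1,3,2)` and `(1,2,3)` reads `a_{13} a_{32} = 0` and `a_{12} a_{23} = 0`: if the scalar
`a_{23}` were nonzero, both `a_{12}` and `a_{13}` would vanish. Hence `a_{23} = 0`, and then
`a_{12}, a_{13} ≠ 0`. The condition for `(2,1,3)` is `a_{21} a_{13} = -a_{12}ᴴ a_{13} = 0`.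
In the code the blocks `1, 2, 3` are `0, 1, 2 : Fin 3`.
-/

open Matrix BigOperators

/-- The `(i,j)` block of `A` is nonzero. -/
def blockNeZero {n s : ℕ} (π : Fin n → Fin s) (A : Matrix (Fin n) (Fin n) ℂ)
    (i j : Fin s) : Prop :=
  ∃ p q, π p = i ∧ π q = j ∧ A p q ≠ 0

/-- `A` is essentially block-diagonal: at most one nonzero off-diagonal block in each
block row and in each block column. -/
def EssentiallyBlockDiagonal {n s : ℕ} (π : Fin n → Fin s)
    (A : Matrix (Fin n) (Fin n) ℂ) : Prop :=
  (∀ i j j', j ≠ i → j' ≠ i → blockNeZero π A i j → blockNeZero π A i j' → j = j') ∧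
  (∀ i j j', j ≠ i → j' ≠ i → blockNeZero π A j i → blockNeZero π A j' i → j = j')

open Finset

section BlockNeZero

variable {n s : ℕ} {π : Fin n → Fin s} {A : Matrix (Fin n) (Fin n) ℂ}

lemma blockNeZero.symm (hA : Aᴴ = -A) {i j : Fin s} (h : blockNeZero π A i j) :
    blockNeZero π A j i := by
  obtain ⟨p, q, hp, hq, hpq⟩ := h
  refine ⟨q, p, hq, hp, fun hqp => hpq ?_⟩
  have h := congr_fun₂ hA p q
  rw [conjTranspose_apply, neg_apply, hqp, star_zero] at h
  exact neg_eq_zero.1 h.symm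

lemma blockNeZero_comm (hA : Aᴴ = -A) {i j : Fin s} :
    blockNeZero π A i j ↔ blockNeZero π A j i :=
  ⟨.symm hA, .symm hA⟩

lemma not_blockNeZero_self (hdiag : ∀ p q, π p = π q → A p q = 0) (i : Fin s) :
    ¬ blockNeZero π A i i := by
  rintro ⟨p, q, hp, hq, hpq⟩
  exact hpq (hdiag p q (hp.trans hq.symm))

lemma blockNeZero_iff_of_singleton_right {i j : Fin s} {q₀ : Fin n}
    (hj : ∀ q, π q = j ↔ q = q₀) :
    blockNeZero π A i j ↔ ∃ p, π p = i ∧ A p q₀ ≠ 0 := by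
  simp [blockNeZero, hj]

lemma blockNeZero_iff_of_singleton {i j : Fin s} {p₀ q₀ : Fin n}
    (hi : ∀ p, π p = i ↔ p = p₀) (hj : ∀ q, π q = j ↔ q = q₀) :
    blockNeZero π A i j ↔ A p₀ q₀ ≠ 0 := by
  simp only [blockNeZero_iff_of_singleton_right hj, hi, exists_eq_left]

lemma essentiallyBlockDiagonal_of_blockNeZero_imp (a b : Fin s)
    (h : ∀ i j, blockNeZero π A i j → i = a ∧ j = b ∨ i = b ∧ j = a) :
    EssentiallyBlockDiagonal π A := by
  constructor <;> intro i j j' hj hj' hij hij' <;> grind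

end BlockNeZero

lemma essentiallyBlockDiagonal_of_not_blockNeZero {n : ℕ} {π : Fin n → Fin 3}
    {A : Matrix (Fin n) (Fin n) ℂ} (hA : Aᴴ = -A) (hdiag : ∀ p q, π p = π q → A p q = 0)
    {a b c : Fin 3} (hab : a ≠ b) (hac : a ≠ c) (hbc : b ≠ c)
    (hb : ¬ blockNeZero π A a b) (hc : ¬ blockNeZero π A a c) :
    EssentiallyBlockDiagonal π A := by
  refine essentiallyBlockDiagonal_of_blockNeZero_imp b c fun i j h => ?_
  have hcover : ∀ x : Fin 3, x = a ∨ x = b ∨ x = c := by omega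
  have hb' : ¬ blockNeZero π A b a := by rwa [blockNeZero_comm hA]
  have hc' : ¬ blockNeZero π A c a := by rwa [blockNeZero_comm hA]
  rcases hcover i with rfl | rfl | rfl <;> rcases hcover j with rfl | rfl | rfl <;>
    first
    | exact absurd h (not_blockNeZero_self hdiag _)
    | tauto

lemma sum_filter_eq_of_singleton {ι α : Type*} [Fintype ι] [DecidableEq ι] [AddCommMonoid α]
    {κ : Type*} [DecidableEq κ] {π : ι → κ} {j : κ} {r₀ : ι} (hj : ∀ r, π r = j ↔ r = r₀)
    (f : ι → α) : ∑ r ∈ univ.filter (fun r => π r = j), f r = f r₀ := by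
  rw [filter_congr fun r _ => hj r, filter_eq', if_pos (mem_univ _), sum_singleton]

lemma not_blockNeZero_of_sum_filter_mul_eq_zero {n s : ℕ} {π : Fin n → Fin s}
    {A : Matrix (Fin n) (Fin n) ℂ} {i j : Fin s} {r₀ q₀ : Fin n} (hj : ∀ r, π r = j ↔ r = r₀)
    (h : ∀ p, π p = i → ∑ r ∈ univ.filter (fun r => π r = j), A p r * A r q₀ = 0)
    (hne : A r₀ q₀ ≠ 0) : ¬ blockNeZero π A i j := by
  rw [blockNeZero_iff_of_singleton_right hj]
  rintro ⟨p, hp, hpr⟩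
  exact mul_ne_zero hpr hne (by simpa only [sum_filter_eq_of_singleton hj] using h p hp)

section FlagBlocks

variable {n : ℕ} {π : Fin n → Fin 3}

lemma flag_blocks_eq_one_iff
    (hπ : ∀ x : Fin n, π x = if (x : ℕ) < n - 2 then 0 else if (x : ℕ) = n - 2 then 1 else 2)
    {i₂ : Fin n} (hi₂ : (i₂ : ℕ) = n - 2) (q : Fin n) : π q = 1 ↔ q = i₂ := by
  rw [hπ q]
  split_ifs <;> simp [Fin.ext_iff, hi₂] <;> omega

lemma flag_blocks_eq_two_iff (hn : 2 ≤ n)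
    (hπ : ∀ x : Fin n, π x = if (x : ℕ) < n - 2 then 0 else if (x : ℕ) = n - 2 then 1 else 2)
    {i₃ : Fin n} (hi₃ : (i₃ : ℕ) = n - 1) (q : Fin n) : π q = 2 ↔ q = i₃ := by
  have := q.isLt
  rw [hπ q]
  split_ifs <;> simp [Fin.ext_iff, hi₃] <;> omega

end FlagBlocks

/-- On the flag manifold `F(n; n−2, 1, 1)`: an equigeodesic `A` which is not essentially
block-diagonal has `a_{23} = 0` and nonzero, mutually orthogonal column vectors
`a_{12}, a_{13} ∈ ℂ^{n−2}`. Here block `1` consists of the indices `0,…,n−3`, block `2`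
of the index `n−2`, and block `3` of the index `n−1`. -/
theorem stmt14 (n : ℕ) (hn : 3 ≤ n) (π : Fin n → Fin 3)
    (hπ : ∀ x : Fin n, π x = if (x : ℕ) < n - 2 then 0 else if (x : ℕ) = n - 2 then 1 else 2)
    (A : Matrix (Fin n) (Fin n) ℂ) (hA : Aᴴ = -A)
    (hAblocks : ∀ p q, π p = π q → A p q = 0)
    (heq : ∀ (i j m : Fin 3), i ≠ j → j ≠ m → i ≠ m →
      ∀ p q, π p = i → π q = m →
        ∑ r ∈ Finset.univ.filter (fun r => π r = j), A p r * A r q = 0)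
    (hnEBD : ¬ EssentiallyBlockDiagonal π A) :
    ∀ i2 i3 : Fin n, (i2 : ℕ) = n - 2 → (i3 : ℕ) = n - 1 →
      A i2 i3 = 0 ∧
      (∃ p, π p = 0 ∧ A p i2 ≠ 0) ∧
      (∃ p, π p = 0 ∧ A p i3 ≠ 0) ∧
      ∑ p ∈ Finset.univ.filter (fun p => π p = 0),
        (starRingEnd ℂ) (A p i2) * A p i3 = 0 := by
  intro i2 i3 hi2 hi3
  have hπ1 := flag_blocks_eq_one_iff hπ hi2
  have hπ2 := flag_blocks_eq_two_iff (by omega) hπ hi3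
  have hπi2 : π i2 = 1 := (hπ1 i2).2 rfl
  have hπi3 : π i3 = 2 := (hπ2 i3).2 rfl
  have hskew : ∀ p q, A p q = -starRingEnd ℂ (A q p) := fun p q => by
    rw [starRingEnd_apply, ← conjTranspose_apply, hA, neg_apply, neg_neg]
  have h23 : A i2 i3 = 0 := by
    by_contra h23
    have h32 : A i3 i2 ≠ 0 := by simpa [hskew i3 i2] using h23
    exact hnEBD (essentiallyBlockDiagonal_of_not_blockNeZero (a := 0) (b := 1) (c := 2) hA
      hAblocks (by decide) (by decide) (by decide)
      (not_blockNeZero_of_sum_filter_mul_eq_zero hπ1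
        (fun p hp => heq 0 1 2 (by decide) (by decide) (by decide) p i3 hp hπi3) h23)
      (not_blockNeZero_of_sum_filter_mul_eq_zero hπ2
        (fun p hp => heq 0 2 1 (by decide) (by decide) (by decide) p i2 hp hπi2) h32))
  have hblock23 : ¬ blockNeZero π A 1 2 := by simp [blockNeZero_iff_of_singleton hπ1 hπ2, h23]
  have h12 : ∃ p, π p = 0 ∧ A p i2 ≠ 0 := by
    rw [← blockNeZero_iff_of_singleton_right hπ1, blockNeZero_comm hA]
    by_contra h12
    exact hnEBD (essentiallyBlockDiagonal_of_not_blockNeZero (a := 1) (b := 0) (c := 2) hA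
      hAblocks (by decide) (by decide) (by decide) h12 hblock23)
  have h13 : ∃ p, π p = 0 ∧ A p i3 ≠ 0 := by
    rw [← blockNeZero_iff_of_singleton_right hπ2, blockNeZero_comm hA]
    by_contra h13
    exact hnEBD (essentiallyBlockDiagonal_of_not_blockNeZero (a := 2) (b := 0) (c := 1) hA
      hAblocks (by decide) (by decide) (by decide) h13 (by rwa [blockNeZero_comm hA]))
  refine ⟨h23, h12, h13, ?_⟩
  have horth := heq 1 0 2 (by decide) (by decide) (by decide) i2 i3 hπi2 hπi3
  simpa only [hskew i2, neg_mul, sum_neg_distrib, neg_eq_zero] using horth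
end

section
/- Let A be an n×n skew-Hermitian complex matrix with zero diagonal blocks. For each pair of block indices i ≠ j, let B_{ij} be the matrix agreeing with A on the blocks (i,j) and (j,i) and zero elsewhere. Then the commutator A·(Λ∙A) − (Λ∙A)·A has all its off-diagonal-block entries equal to zero for every metric datum Λ if and only if for every pair i ≠ j the commutator A·B_{ij} − B_{ij}·A has all its off-diagonal-block entries equal to zero. -/
open Matrix BigOperators

/-- The matrix agreeing with `A` on the blocks `(i,j)` and `(j,i)` and zero elsewhere. -/
def blockPair {n s : ℕ} (π : Fin n → Fin s) (A : Matrix (Fin n) (Fin n) ℂ) (i j : Fin s) :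
    Matrix (Fin n) (Fin n) ℂ :=
  Matrix.of fun p q =>
    if (π p = i ∧ π q = j) ∨ (π p = j ∧ π q = i) then A p q else 0

/-!
Since `A` vanishes on the diagonal blocks, for symmetric `Λ` one has
`2 (Λ∙A) = ∑_{i,j} Λ i j B_{ij}`, so `[A, Λ∙A]` is a linear combination of the `[A, B_{ij}]`
with `i ≠ j`. Conversely, for `Λ = 1 + 𝟙_{{i,j}}` one gets `Λ∙A = A + B_{ij}`, hence
`[A, Λ∙A] = [A, B_{ij}]`.
-/

section

variable {n s : ℕ} (π : Fin n → Fin s)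

def blockPart (A : Matrix (Fin n) (Fin n) ℂ) (i j : Fin s) : Matrix (Fin n) (Fin n) ℂ :=
  Matrix.of fun p q => if π p = i ∧ π q = j then A p q else 0

def pairIndicator (i j : Fin s) : Fin s → Fin s → ℝ :=
  fun a b => if (a = i ∧ b = j) ∨ (a = j ∧ b = i) then 1 else 0

lemma pairIndicator_comm (i j a b : Fin s) : pairIndicator i j a b = pairIndicator i j b a := by
  simp only [pairIndicator]
  congr 1
  exact propext (by tauto)

lemma pairIndicator_nonneg (i j a b : Fin s) : 0 ≤ pairIndicator i j a b := by
  unfold pairIndicator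
  positivity

lemma metricHadamard_add (Λ Λ' : Fin s → Fin s → ℝ) (A : Matrix (Fin n) (Fin n) ℂ) :
    metricHadamard π (Λ + Λ') A = metricHadamard π Λ A + metricHadamard π Λ' A := by
  ext p q
  simp [metricHadamard, add_mul]

lemma metricHadamard_one (A : Matrix (Fin n) (Fin n) ℂ) : metricHadamard π 1 A = A := by
  ext p q
  simp [metricHadamard]

lemma metricHadamard_pairIndicator (A : Matrix (Fin n) (Fin n) ℂ) (i j : Fin s) :
    metricHadamard π (pairIndicator i j) A = blockPair π A i j := by
  ext p q
  simp only [metricHadamard, pairIndicator, blockPair, Matrix.of_apply]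
  split_ifs <;> simp

lemma metricHadamard_eq_sum_blockPart (Λ : Fin s → Fin s → ℝ) (A : Matrix (Fin n) (Fin n) ℂ) :
    metricHadamard π Λ A = ∑ i, ∑ j, (Λ i j : ℂ) • blockPart π A i j := by
  ext p q
  simp [metricHadamard, blockPart, Matrix.sum_apply, ite_and]

variable {π} {A : Matrix (Fin n) (Fin n) ℂ}

lemma blockPair_eq_blockPart_add (hA : ∀ p q, π p = π q → A p q = 0) (i j : Fin s) :
    blockPair π A i j = blockPart π A i j + blockPart π A j i := by
  ext p q
  by_cases hpq : π p = π q
  · simp [blockPair, blockPart, hA p q hpq]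
  · simp only [blockPair, blockPart, Matrix.of_apply, Matrix.add_apply]
    split_ifs <;> grind

lemma blockPart_self (hA : ∀ p q, π p = π q → A p q = 0) (i : Fin s) :
    blockPart π A i i = 0 := by
  ext p q
  simp only [blockPart, Matrix.of_apply, Matrix.zero_apply]
  split_ifs with h
  exacts [hA p q (h.1.trans h.2.symm), rfl]

lemma blockPair_self (hA : ∀ p q, π p = π q → A p q = 0) (i : Fin s) :
    blockPair π A i i = 0 := by
  rw [blockPair_eq_blockPart_add hA, blockPart_self hA, add_zero]

lemma two_smul_metricHadamard {Λ : Fin s → Fin s → ℝ} (hΛ : ∀ i j, Λ i j = Λ j i)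
    (hA : ∀ p q, π p = π q → A p q = 0) :
    (2 : ℂ) • metricHadamard π Λ A = ∑ i, ∑ j, (Λ i j : ℂ) • blockPair π A i j := by
  have transposed : ∑ i, ∑ j, (Λ i j : ℂ) • blockPart π A j i = metricHadamard π Λ A := by
    rw [Finset.sum_comm, metricHadamard_eq_sum_blockPart]
    simp only [hΛ]
  simp only [blockPair_eq_blockPart_add hA, smul_add, Finset.sum_add_distrib, transposed,
    ← metricHadamard_eq_sum_blockPart, two_smul]

lemma two_smul_commutator_metricHadamard {Λ : Fin s → Fin s → ℝ} (hΛ : ∀ i j, Λ i j = Λ j i)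
    (hA : ∀ p q, π p = π q → A p q = 0) :
    (2 : ℂ) • (A * metricHadamard π Λ A - metricHadamard π Λ A * A) =
      ∑ i, ∑ j, (Λ i j : ℂ) • (A * blockPair π A i j - blockPair π A i j * A) := by
  let ad := LinearMap.mulLeft ℂ A - LinearMap.mulRight ℂ A
  have ad_apply (X : Matrix (Fin n) (Fin n) ℂ) : ad X = A * X - X * A := rfl
  simp only [← ad_apply, ← map_smul, two_smul_metricHadamard hΛ hA, map_sum]

end

theorem stmt15_general (n s : ℕ) (π : Fin n → Fin s)
    (A : Matrix (Fin n) (Fin n) ℂ)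
    (hAblocks : ∀ p q, π p = π q → A p q = 0) :
    (∀ Λ : Fin s → Fin s → ℝ, (∀ i j, Λ i j = Λ j i) → (∀ i j, i ≠ j → 0 < Λ i j) →
        ∀ p q, π p ≠ π q →
          (A * metricHadamard π Λ A - metricHadamard π Λ A * A) p q = 0) ↔
      (∀ i j : Fin s, i ≠ j → ∀ p q, π p ≠ π q →
        (A * blockPair π A i j - blockPair π A i j * A) p q = 0) := by
  constructor
  · intro h i j _ p q hpq
    have symm (a b : Fin s) : (1 + pairIndicator i j) a b = (1 + pairIndicator i j) b a := by
      simp only [Pi.add_apply, Pi.one_apply, pairIndicator_comm i j a b]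
    have pos (a b : Fin s) (_ : a ≠ b) : 0 < (1 + pairIndicator i j) a b := by
      simp only [Pi.add_apply, Pi.one_apply]
      linarith [pairIndicator_nonneg i j a b]
    have hcomm := h (1 + pairIndicator i j) symm pos p q hpq
    rwa [metricHadamard_add, metricHadamard_one, metricHadamard_pairIndicator, mul_add, add_mul,
      add_sub_add_left_eq_sub] at hcomm
  · intro h Λ hΛ _ p q hpq
    have hsum : (∑ i, ∑ j, (Λ i j : ℂ) • (A * blockPair π A i j - blockPair π A i j * A)) p q
        = 0 := by
      simp only [Matrix.sum_apply, Matrix.smul_apply]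
      refine Finset.sum_eq_zero fun i _ => Finset.sum_eq_zero fun j _ => ?_
      rcases eq_or_ne i j with rfl | hij
      · simp [blockPair_self hAblocks]
      · rw [h i j hij p q hpq, smul_zero]
    rw [← two_smul_commutator_metricHadamard hΛ hAblocks, Matrix.smul_apply, smul_eq_mul,
      mul_eq_zero] at hsum
    exact hsum.resolve_left two_ne_zero

/-- `[A, Λ∙A]` has vanishing off-diagonal-block entries for every metric datum `Λ` iff
for every pair of distinct block indices `i ≠ j` the commutator `[A, B_{ij}]` has
vanishing off-diagonal-block entries, where `B_{ij}` is the part of `A` supported on the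
blocks `(i,j)` and `(j,i)`. -/
theorem stmt15 (n s : ℕ) (π : Fin n → Fin s) (hπ : Function.Surjective π)
    (A : Matrix (Fin n) (Fin n) ℂ) (hA : Aᴴ = -A)
    (hAblocks : ∀ p q, π p = π q → A p q = 0) :
    (∀ Λ : Fin s → Fin s → ℝ, (∀ i j, Λ i j = Λ j i) → (∀ i j, i ≠ j → 0 < Λ i j) →
        ∀ p q, π p ≠ π q →
          (A * metricHadamard π Λ A - metricHadamard π Λ A * A) p q = 0) ↔
      (∀ i j : Fin s, i ≠ j → ∀ p q, π p ≠ π q →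
        (A * blockPair π A i j - blockPair π A i j * A) p q = 0) :=
  stmt15_general n s π A hAblocks
end
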